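/- Let R ≥ 1, T ≥ 1, and set C = 4√(cosh R + 2)/√(cosh R). Suppose r ≥ C cosh T and d₁ ≤ (C cosh T)^{−1}. Then for every s ∈ ℝ with r/(4 cosh T) ≤ e^s ≤ 4 r cosh T one has d₁² e^{4s} + 2(a² + r² − 2(cosh R)² r²) e^{2s} + d₂² ≤ 0; equivalently, every such point γ₂(s) lies within hyperbolic distance R of the z-axis {(0,0,e^t) : t ∈ ℝ}. -/

import Mathlib

open Real

noncomputable section

/-- Inverse hyperbolic cosine. -/
def arcosh (x : ℝ) : ℝ := Real.log (x + Real.sqrt (x ^ 2 - 1))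

/-- Hyperbolic distance in the upper half-space model of `H³`. -/
def rho (p q : ℝ × ℝ × ℝ) : ℝ :=
  _root_.arcosh (1 +
    ((q.1 - p.1) ^ 2 + (q.2.1 - p.2.1) ^ 2 + (q.2.2 - p.2.2) ^ 2) / (2 * p.2.2 * q.2.2))

/-- The half-circle geodesic `γ₂`. -/
def gamma2 (a r β s : ℝ) : ℝ × ℝ × ℝ :=
  (a + r * Real.cos β * (1 - Real.exp (2 * s)) / (1 + Real.exp (2 * s)),
   r * Real.sin β * (1 - Real.exp (2 * s)) / (1 + Real.exp (2 * s)),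
   2 * r * Real.exp s / (1 + Real.exp (2 * s)))

/-- `d₁ = √(a² + r² − 2ar cos β)`. -/
def d1 (a r β : ℝ) : ℝ := Real.sqrt (a ^ 2 + r ^ 2 - 2 * a * r * Real.cos β)

/-- `d₂ = √(a² + r² + 2ar cos β)`. -/
def d2 (a r β : ℝ) : ℝ := Real.sqrt (a ^ 2 + r ^ 2 + 2 * a * r * Real.cos β)


/-!
Write `X = e^{2s}`. Since `d₁² + d₂² = 2(a² + r²)`, the quartic equals
`(d₁² X + d₂²)(1 + X) - 4 cosh² R · r² X`. On the other hand `|γ₂(s)|² (1 + X) = d₁² X + d₂²` and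
the height of `γ₂(s)` is `2 r e^s / (1 + X)`, so the quartic is nonpositive exactly when
`|γ₂(s)| ≤ cosh R · height`; and the point of the axis at Euclidean height `|p|` is at distance
`arcosh (|p| / height)` from `p`. For `X` between `r² / (16 cosh² T)` and `16 r² cosh² T` we bound
`(d₁² X + d₂²)(1 + X) / X ≤ 16 r² cosh² T · d₁² + d₁² + d₂² + 16 cosh² T · d₂² / r²`. The choice of
`C` makes the first and last terms at most `cosh R / (cosh R + 2)` times `r²` and `d₂²`, while
`d₂ ≤ d₁ + 2r` is close to `2r`; the total stays below `4 cosh² R · r²` as soon as `cosh R ≥ 3/2`.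
-/

lemma arcosh_le_of_le_cosh {x R : ℝ} (hx : 0 < x) (hR : 0 ≤ R) (h : x ≤ cosh R) :
    _root_.arcosh x ≤ R :=
  calc Real.arcosh x ≤ Real.arcosh (cosh R) := (Real.arcosh_le_arcosh hx (cosh_pos R)).2 h
    _ = R := Real.arcosh_cosh hR

lemma three_halves_le_cosh {x : ℝ} (hx : 1 ≤ x) : 3 / 2 ≤ cosh x := by
  have hcosh_one : 3 / 2 ≤ cosh 1 := by
    have he : exp 1 * exp (-1) = 1 := by rw [← exp_add]; norm_num
    rw [cosh_eq]
    nlinarith [exp_one_gt_d9, exp_one_lt_d9, exp_pos (-1)]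
  refine hcosh_one.trans (cosh_le_cosh.2 ?_)
  rwa [abs_of_pos one_pos, abs_of_pos (by linarith)]

lemma exp_sq (x : ℝ) : exp x ^ 2 = exp (2 * x) := by
  rw [← exp_nat_mul]; norm_num

lemma rho_nonneg {p q : ℝ × ℝ × ℝ} (hp : 0 < p.2.2) (hq : 0 < q.2.2) : 0 ≤ rho p q :=
  Real.arcosh_nonneg (le_add_of_nonneg_right (by positivity))

lemma rho_axis_sqrt_sq_sum {p : ℝ × ℝ × ℝ} (hz : 0 < p.2.2) :
    rho p (0, 0, √(p.1 ^ 2 + p.2.1 ^ 2 + p.2.2 ^ 2)) =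
      _root_.arcosh (√(p.1 ^ 2 + p.2.1 ^ 2 + p.2.2 ^ 2) / p.2.2) := by
  obtain ⟨x, y, z⟩ := p
  set N := √(x ^ 2 + y ^ 2 + z ^ 2)
  have hN : 0 < N := sqrt_pos.2 (by positivity)
  have hN2 : N ^ 2 = x ^ 2 + y ^ 2 + z ^ 2 := sq_sqrt (by positivity)
  simp only [rho]
  congr 1
  field_simp
  linear_combination -hN2

lemma iInf_rho_axis_le {p : ℝ × ℝ × ℝ} {R : ℝ} (hz : 0 < p.2.2) (hR : 0 ≤ R)
    (h : p.1 ^ 2 + p.2.1 ^ 2 + p.2.2 ^ 2 ≤ (cosh R * p.2.2) ^ 2) :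
    ⨅ t : ℝ, rho p (0, 0, exp t) ≤ R := by
  have hN : 0 < √(p.1 ^ 2 + p.2.1 ^ 2 + p.2.2 ^ 2) := sqrt_pos.2 (by positivity)
  refine ciInf_le_of_le ⟨0, ?_⟩ (log √(p.1 ^ 2 + p.2.1 ^ 2 + p.2.2 ^ 2)) ?_
  · rintro _ ⟨t, rfl⟩
    exact rho_nonneg hz (exp_pos t)
  rw [exp_log hN, rho_axis_sqrt_sq_sum hz]
  refine arcosh_le_of_le_cosh (div_pos hN hz) hR ((div_le_iff₀ hz).2 ?_)
  calc _ ≤ √((cosh R * p.2.2) ^ 2) := sqrt_le_sqrt h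
    _ = cosh R * p.2.2 := sqrt_sq (by positivity)

section Gamma2

variable (a r β : ℝ)

lemma d1_sq : d1 a r β ^ 2 = a ^ 2 + r ^ 2 - 2 * a * r * cos β :=
  sq_sqrt (by nlinarith [sin_sq_add_cos_sq β, sq_nonneg (a - r * cos β), sq_nonneg (r * sin β)])

lemma d2_sq : d2 a r β ^ 2 = a ^ 2 + r ^ 2 + 2 * a * r * cos β :=
  sq_sqrt (by nlinarith [sin_sq_add_cos_sq β, sq_nonneg (a + r * cos β), sq_nonneg (r * sin β)])

lemma d1_sq_add_d2_sq : d1 a r β ^ 2 + d2 a r β ^ 2 = 2 * (a ^ 2 + r ^ 2) := by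
  rw [d1_sq, d2_sq]; ring

variable {r} in
/-- `d₁ = |P - Q|` and `d₂ = |P + Q|` for `P = (a, 0)` and `Q = r (cos β, sin β)`: this is the
triangle inequality. -/
lemma d2_le_d1_add_two_mul (hr : 0 ≤ r) : d2 a r β ≤ d1 a r β + 2 * r := by
  have hd1 : a * cos β - r ≤ d1 a r β :=
    (le_abs_self _).trans (abs_le_sqrt (by nlinarith [sin_sq_add_cos_sq β, sq_nonneg (a * sin β)]))
  refine sqrt_le_iff.2 ⟨add_nonneg (sqrt_nonneg _) (by linarith), ?_⟩
  nlinarith [d1_sq a r β]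

lemma gamma2_sq_sum_mul (s : ℝ) :
    ((gamma2 a r β s).1 ^ 2 + (gamma2 a r β s).2.1 ^ 2 + (gamma2 a r β s).2.2 ^ 2) *
      (1 + exp (2 * s)) = d1 a r β ^ 2 * exp (2 * s) + d2 a r β ^ 2 := by
  simp only [gamma2]
  rw [d1_sq, d2_sq]
  field_simp
  linear_combination (r ^ 2 * (1 - exp (2 * s)) ^ 2) * sin_sq_add_cos_sq β + 4 * r ^ 2 * exp_sq s

variable {a r β} in
lemma gamma2_sq_sum_le {s k : ℝ}
    (h : (d1 a r β ^ 2 * exp (2 * s) + d2 a r β ^ 2) * (1 + exp (2 * s)) ≤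
      4 * k ^ 2 * r ^ 2 * exp (2 * s)) :
    (gamma2 a r β s).1 ^ 2 + (gamma2 a r β s).2.1 ^ 2 + (gamma2 a r β s).2.2 ^ 2 ≤
      (k * (gamma2 a r β s).2.2) ^ 2 := by
  have hX : 0 < (1 + exp (2 * s)) ^ 2 := by positivity
  have hz : ((gamma2 a r β s).2.2 * (1 + exp (2 * s))) ^ 2 = 4 * r ^ 2 * exp (2 * s) := by
    simp only [gamma2]
    rw [div_mul_cancel₀ _ (by positivity), ← exp_sq]
    ring
  refine le_of_mul_le_mul_right ?_ hX
  calc _ = (d1 a r β ^ 2 * exp (2 * s) + d2 a r β ^ 2) * (1 + exp (2 * s)) := by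
        rw [← gamma2_sq_sum_mul]; ring
    _ ≤ 4 * k ^ 2 * r ^ 2 * exp (2 * s) := h
    _ = _ := by linear_combination (-k ^ 2) * hz

end Gamma2

lemma mul_one_add_le_of_mem_Icc {u v L X U : ℝ} (hu : 0 ≤ u) (hv : 0 ≤ v) (hL : 0 < L)
    (hX : X ∈ Set.Icc L U) : (u * X + v) * (1 + X) ≤ (u * U + u + v + v / L) * X := by
  obtain ⟨hLX, hXU⟩ := hX
  have hvX : v ≤ v / L * X := by
    rw [div_mul_eq_mul_div, le_div_iff₀ hL]; exact mul_le_mul_of_nonneg_left hLX hv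
  nlinarith [mul_le_mul_of_nonneg_left hXU (mul_nonneg hu (hL.le.trans hLX))]

lemma tube_constant_bounds {k h r u : ℝ} (hk : 0 < k) (hh : 0 < h) (hu : 0 ≤ u)
    (hr : 4 * √(k + 2) / √k * h ≤ r) (hur : u ≤ (4 * √(k + 2) / √k * h)⁻¹) :
    0 < r ∧ 16 * (k + 2) * h ^ 2 ≤ k * r ^ 2 ∧ 16 * (k + 2) * h ^ 2 * u ^ 2 ≤ k := by
  set C := 4 * √(k + 2) / √k
  have hC : C ^ 2 * k = 16 * (k + 2) := by
    rw [div_pow, mul_pow, sq_sqrt (by linarith), sq_sqrt hk.le]; field_simp; norm_num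
  have hCh : 0 < C * h := by positivity
  have huCh : u * (C * h) ≤ 1 :=
    calc u * (C * h) ≤ (C * h)⁻¹ * (C * h) := mul_le_mul_of_nonneg_right hur hCh.le
      _ = 1 := inv_mul_cancel₀ hCh.ne'
  refine ⟨hCh.trans_le hr, ?_, ?_⟩
  · calc 16 * (k + 2) * h ^ 2 = (C * h) ^ 2 * k := by rw [← hC]; ring
      _ ≤ r ^ 2 * k := by gcongr
      _ = k * r ^ 2 := mul_comm _ _
  · calc 16 * (k + 2) * h ^ 2 * u ^ 2 = (u * (C * h)) ^ 2 * k := by rw [← hC]; ring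
      _ ≤ 1 * k := by gcongr; exact pow_le_one₀ (by positivity) huCh
      _ = k := one_mul k

lemma tube_estimate {k h r u d : ℝ} (hk : 3 / 2 ≤ k) (hh : 1 ≤ h) (hr : 0 < r) (hu : 0 ≤ u)
    (hd : 0 ≤ d) (hdr : d ≤ u + 2 * r) (hrh : 16 * (k + 2) * h ^ 2 ≤ k * r ^ 2)
    (huh : 16 * (k + 2) * h ^ 2 * u ^ 2 ≤ k) :
    u ^ 2 * (4 * r * h) ^ 2 + u ^ 2 + d ^ 2 + d ^ 2 / (r / (4 * h)) ^ 2 ≤ 4 * k ^ 2 * r ^ 2 := by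
  have hk2 : 0 < k + 2 := by linarith
  have hh2 : 1 ≤ h ^ 2 := one_le_pow₀ hh
  have hr4 : 4 ≤ r := by
    have : k * 16 ≤ k * r ^ 2 := by nlinarith
    nlinarith [le_of_mul_le_mul_left this (by linarith)]
  have hu_small : (k + 2) * u ^ 2 ≤ k / 16 := by nlinarith
  have hd_sq : d ^ 2 ≤ 81 / 16 * r ^ 2 := by
    have hu2 : u ^ 2 ≤ 1 / 16 := by nlinarith
    have : u ≤ 1 / 4 := by nlinarith
    nlinarith
  have hfar : (k + 2) * (u ^ 2 * (4 * r * h) ^ 2) ≤ k * r ^ 2 := by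
    nlinarith [mul_le_mul_of_nonneg_right huh (sq_nonneg r)]
  have hnear : (k + 2) * (d ^ 2 / (r / (4 * h)) ^ 2) ≤ k * d ^ 2 := by
    rw [div_pow, div_div_eq_mul_div, ← mul_div_assoc, div_le_iff₀ (by positivity)]
    nlinarith [mul_le_mul_of_nonneg_right hrh (sq_nonneg d)]
  have hcubic : 257 / 256 * k + (2 * k + 2) * (81 / 16) ≤ 4 * k ^ 2 * (k + 2) := by
    nlinarith [mul_nonneg (sub_nonneg.2 hk) (sub_nonneg.2 hk)]
  refine le_of_mul_le_mul_left ?_ hk2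
  nlinarith [mul_le_mul_of_nonneg_right hcubic (sq_nonneg r)]

theorem gamma2_segment_in_tube_general (a r β R T : ℝ) (hR : 1 ≤ R)
    (hrbig : 4 * Real.sqrt (Real.cosh R + 2) / Real.sqrt (Real.cosh R) * Real.cosh T ≤ r)
    (hd1small : d1 a r β ≤
      (4 * Real.sqrt (Real.cosh R + 2) / Real.sqrt (Real.cosh R) * Real.cosh T)⁻¹) :
    ∀ s : ℝ, r / (4 * Real.cosh T) ≤ Real.exp s → Real.exp s ≤ 4 * r * Real.cosh T →
      d1 a r β ^ 2 * Real.exp (4 * s) +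
          2 * (a ^ 2 + r ^ 2 - 2 * Real.cosh R ^ 2 * r ^ 2) * Real.exp (2 * s) +
          d2 a r β ^ 2 ≤ 0 ∧
      (⨅ t : ℝ, rho (gamma2 a r β s) (0, 0, Real.exp t)) ≤ R := by
  intro s hs_lo hs_hi
  have hk := three_halves_le_cosh hR
  have hh := one_le_cosh T
  obtain ⟨hr, hrh, huh⟩ :=
    tube_constant_bounds (by linarith) (by linarith) (sqrt_nonneg _) hrbig hd1small
  have hX : exp (2 * s) ∈ Set.Icc ((r / (4 * cosh T)) ^ 2) ((4 * r * cosh T) ^ 2) := by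
    rw [← exp_sq]
    exact ⟨pow_le_pow_left₀ (by positivity) hs_lo 2, pow_le_pow_left₀ (exp_pos s).le hs_hi 2⟩
  have key : (d1 a r β ^ 2 * exp (2 * s) + d2 a r β ^ 2) * (1 + exp (2 * s)) ≤
      4 * cosh R ^ 2 * r ^ 2 * exp (2 * s) :=
    (mul_one_add_le_of_mem_Icc (sq_nonneg _) (sq_nonneg _) (by positivity) hX).trans
      (mul_le_mul_of_nonneg_right (tube_estimate hk hh hr (sqrt_nonneg _) (sqrt_nonneg _)
        (d2_le_d1_add_two_mul a β hr.le) hrh huh) (exp_pos _).le)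
  refine ⟨?_, iInf_rho_axis_le (by simp only [gamma2]; positivity) (by linarith)
    (gamma2_sq_sum_le key)⟩
  rw [show 4 * s = 2 * (2 * s) by ring, ← exp_sq]
  linear_combination key - exp (2 * s) * d1_sq_add_d2_sq a r β

/-- If `r` is large and `d₁` is small, then the whole relevant segment of `γ₂` lies
in the tube of radius `R` about the `z`-axis (the claim (4.4)/(4.12) of the paper). -/
theorem gamma2_segment_in_tube (a r β R T : ℝ) (ha : 0 ≤ a) (hr : 0 < r)
    (hβ : β ∈ Set.Ioc 0 (π / 2)) (hR : 1 ≤ R) (hT : 1 ≤ T)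
    (hrbig : 4 * Real.sqrt (Real.cosh R + 2) / Real.sqrt (Real.cosh R) * Real.cosh T ≤ r)
    (hd1small : d1 a r β ≤
      (4 * Real.sqrt (Real.cosh R + 2) / Real.sqrt (Real.cosh R) * Real.cosh T)⁻¹) :
    ∀ s : ℝ, r / (4 * Real.cosh T) ≤ Real.exp s → Real.exp s ≤ 4 * r * Real.cosh T →
      d1 a r β ^ 2 * Real.exp (4 * s) +
          2 * (a ^ 2 + r ^ 2 - 2 * Real.cosh R ^ 2 * r ^ 2) * Real.exp (2 * s) +
          d2 a r β ^ 2 ≤ 0 ∧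
      (⨅ t : ℝ, rho (gamma2 a r β s) (0, 0, Real.exp t)) ≤ R :=
  gamma2_segment_in_tube_general a r β R T hR hrbig hd1small

end
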